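/- (Non-stabilizability of the critical push-pull ring with an even number of servers, hitting-time form.) Let M be even and let α ∈ ℝ^M have entries α_j = (−1)^{j+1}·λ_j^{−1}. Then for every non-idling policy 𝒫, every realization (X_n) of the induced chain started at a state x ∈ ℤ₊^M, and every state y ∈ ℤ₊^M with α⋅x ≠ α⋅y, the hitting time T_y = inf{n ≥ 0 : X_n = y} has infinite expectation: E[T_y] = ∞. -/

import Mathlib

/-!
Put `f z = ∑ⱼ (-1)^j λⱼ⁻¹ zⱼ`, i.e. `f z = α ⬝ z`. When server `j` acts it changes `f` by
`(-1)^j / rⱼ`, where `rⱼ` is the rate of its action, and it acts with probability `rⱼ / r(u)`;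
so the expected change of `f` is `∑ⱼ (-1)^j / r(u)`, which vanishes because `M` is even.
Hence `f(Xₙ)` is a martingale whose increments are bounded by `c = ∑ⱼ λⱼ⁻¹`. If `E[T_y] < ∞`,
optional stopping, with `|f x| + c T_y` as dominating function, gives `f x = E[f(X_{T_y})] = f y`.
-/

open MeasureTheory
open scoped ENNReal

/-- Unnormalized drift row `d(u)` of action `u` in the push-pull ring with push rates
`lam` and pull rates `mu` (`true` = push, `false` = pull). Entry `j` is: `λⱼ` if servers
`j` and `j+1` both push; `λⱼ - μⱼ` if server `j` pushes and server `j+1` pulls; `0` if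
server `j` pulls and server `j+1` pushes; `-μⱼ` if both pull. -/
def ringd (M : ℕ) [NeZero M] (lam mu : Fin M → ℝ) (u : Fin M → Bool) (j : Fin M) : ℝ :=
  if u j then (if u (j + 1) then lam j else lam j - mu j)
  else (if u (j + 1) then 0 else -mu j)

/-- The total rate `r(u) = ∑ⱼ (λⱼ if server j pushes, else μ_{j-1})` of action `u`. -/
def ringr (M : ℕ) [NeZero M] (lam mu : Fin M → ℝ) (u : Fin M → Bool) : ℝ :=
  ∑ j : Fin M, if u j then lam j else mu (j - 1)

/-- The normalized drift `Δ(u) = d(u) / r(u)` of action `u`. -/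
noncomputable def ringDelta (M : ℕ) [NeZero M] (lam mu : Fin M → ℝ) (u : Fin M → Bool)
    (j : Fin M) : ℝ :=
  ringd M lam mu u j / ringr M lam mu u

/-- The `2^M × M` action drift matrix `D`, whose rows are the vectors `Δ(u)`. -/
noncomputable def ringD (M : ℕ) [NeZero M] (lam mu : Fin M → ℝ) :
    Matrix (Fin M → Bool) (Fin M) ℝ :=
  Matrix.of fun u j => ringDelta M lam mu u j

/-- A non-idling policy for the push-pull ring: server `j` may pull (from stream `j-1`,
decreasing queue `j-1`) only if queue `j-1` is nonempty. -/
def RingNonIdling (M : ℕ) [NeZero M] (P : (Fin M → ℕ) → (Fin M → Bool)) : Prop :=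
  ∀ (z : Fin M → ℕ) (j : Fin M), P z j = false → 0 < z (j - 1)

/-- Transition probabilities of the chain induced by a policy `P` for the *critical*
push-pull ring (`μ = λ`): under action `u = P z`, the chain moves to `z + eⱼ` with
probability `λⱼ / r(u)` for each pushing server `j`, and to `z - e_{j-1}` with
probability `μ_{j-1} / r(u) = λ_{j-1} / r(u)` for each pulling server `j`. -/
noncomputable def ringTrans (M : ℕ) [NeZero M] (lam : Fin M → ℝ)
    (P : (Fin M → ℕ) → (Fin M → Bool)) (z z' : Fin M → ℕ) : ℝ :=
  ∑ j : Fin M,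
    ((if P z j = true ∧ z' = Function.update z j (z j + 1) then
        lam j / ringr M lam lam (P z) else 0) +
     (if P z j = false ∧ z' = Function.update z (j - 1) (z (j - 1) - 1) then
        lam (j - 1) / ringr M lam lam (P z) else 0))

/-- `X` is a realization of a Markov chain with one-step transition probabilities `p`
on the filtered probability space `(Ω, ℱ, μ)`. -/
def IsRealization {Ω : Type} {S : Type} [MeasurableSpace S] {mΩ : MeasurableSpace Ω}
    (μ : Measure Ω) (ℱ : Filtration ℕ mΩ) (X : ℕ → Ω → S) (p : S → S → ℝ) : Prop :=
  (∀ n, Measurable[ℱ n] (X n)) ∧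
  ∀ (n : ℕ) (z z' : S), ∀ᵐ ω ∂μ, X n ω = z →
    (μ[Set.indicator {ω' | X (n + 1) ω' = z'} (fun _ => (1 : ℝ)) | ℱ n]) ω = p z z'

/-- The hitting time of the state `y` by the process `X`; `∞` if `y` is never hit. -/
noncomputable def hitTime {Ω S : Type*} (X : ℕ → Ω → S) (y : S) (ω : Ω) : ℝ≥0∞ :=
  sInf {t : ℝ≥0∞ | ∃ n : ℕ, X n ω = y ∧ (n : ℝ≥0∞) = t}

open Filter

section OptionalStopping

variable {Ω : Type*} {mΩ : MeasurableSpace Ω} {μ : Measure Ω} {ℱ : Filtration ℕ mΩ}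

lemma abs_le_abs_add_mul_of_abs_sub_succ_le {u : ℕ → ℝ} {c : ℝ}
    (h : ∀ n, |u (n + 1) - u n| ≤ c) (n : ℕ) : |u n| ≤ |u 0| + c * n := by
  have hdist := dist_le_range_sum_of_dist_le (f := u) n (d := fun _ => c)
    fun _ => by rw [Real.dist_eq, abs_sub_comm]; exact h _
  rw [Finset.sum_const, Finset.card_range, nsmul_eq_mul, Real.dist_eq, abs_sub_comm] at hdist
  linarith [abs_sub_abs_le_abs_sub (u n) (u 0)]

lemma integrable_of_abs_sub_succ_le [IsFiniteMeasure μ] {Y : ℕ → Ω → ℝ} {c : ℝ}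
    (hmeas : ∀ n, AEStronglyMeasurable (Y n) μ) (h0 : Integrable (Y 0) μ)
    (hinc : ∀ᵐ ω ∂μ, ∀ n, |Y (n + 1) ω - Y n ω| ≤ c) (n : ℕ) : Integrable (Y n) μ := by
  induction n with
  | zero => exact h0
  | succ n ih =>
    have hdiff : Integrable (Y (n + 1) - Y n) μ :=
      (integrable_const c).mono' ((hmeas _).sub (hmeas _)) <| by
        filter_upwards [hinc] with ω hω using hω n
    simpa using hdiff.add ih

theorem MeasureTheory.Martingale.stoppedProcess [SigmaFiniteFiltration μ ℱ] {Y : ℕ → Ω → ℝ}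
    {τ : Ω → ℕ∞} (hY : Martingale Y ℱ μ) (hτ : IsStoppingTime ℱ τ) :
    Martingale (stoppedProcess Y τ) ℱ μ := by
  refine martingale_iff.2 ⟨?_, hY.submartingale.stoppedProcess hτ⟩
  have := (hY.neg.submartingale.stoppedProcess hτ).neg
  convert this using 1
  ext n ω
  simp [MeasureTheory.stoppedProcess]

lemma MeasureTheory.IsStoppingTime.ae_ne_top {τ : Ω → ℕ∞} (hτ : IsStoppingTime ℱ τ)
    (hτint : ∫⁻ ω, (τ ω : ℝ≥0∞) ∂μ ≠ ∞) : ∀ᵐ ω ∂μ, τ ω ≠ ⊤ := by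
  filter_upwards [ae_lt_top' ((measurable_of_countable _).comp hτ.measurable').aemeasurable
    hτint] with ω hω
  exact ENat.toENNReal_ne_top.1 hω.ne

lemma abs_stoppedProcess_le {Y : ℕ → Ω → ℝ} {c : ℝ} {τ : Ω → ℕ∞} {ω : Ω} (hc : 0 ≤ c)
    (hinc : ∀ n, |Y (n + 1) ω - Y n ω| ≤ c) (hτ : τ ω ≠ ⊤) (n : ℕ) :
    |(stoppedProcess Y τ n ω)| ≤ |Y 0 ω| + c * (τ ω).toNat := by
  obtain ⟨T, hT⟩ := ENat.ne_top_iff_exists.1 hτ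
  obtain ⟨k, hkT, hk⟩ : ∃ k ≤ T, stoppedProcess Y τ n ω = Y k ω := by
    rcases le_total n T with h | h
    · exact ⟨n, h, stoppedProcess_eq_of_le ((WithTop.coe_le_coe.2 h).trans_eq hT)⟩
    · refine ⟨T, le_rfl, ?_⟩
      rw [stoppedProcess_eq_of_ge (hT.symm.trans_le (WithTop.coe_le_coe.2 h)), ← hT]
      rfl
  have hYk := abs_le_abs_add_mul_of_abs_sub_succ_le (u := fun k => Y k ω) hinc k
  have hkT' : (k : ℝ) ≤ T := by exact_mod_cast hkT
  rw [hk, ← hT, ENat.toNat_natCast]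
  nlinarith

lemma tendsto_stoppedProcess_stoppedValue {β : Type*} [TopologicalSpace β] {u : ℕ → Ω → β}
    {τ : Ω → ℕ∞} {ω : Ω} (hτ : τ ω ≠ ⊤) :
    Tendsto (fun n => stoppedProcess u τ n ω) atTop (nhds (stoppedValue u τ ω)) := by
  obtain ⟨T, hT⟩ := ENat.ne_top_iff_exists.1 hτ
  exact tendsto_atTop_of_eventually_const (i₀ := T) fun n hn =>
    stoppedProcess_eq_of_ge (hT.symm.trans_le (WithTop.coe_le_coe.2 hn))

/-- Bounded increments make `|Y 0| + c τ` a dominating function for the stopped process. -/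
theorem MeasureTheory.Martingale.integral_stoppedValue_eq [IsFiniteMeasure μ] {Y : ℕ → Ω → ℝ}
    {c : ℝ} (hY : Martingale Y ℱ μ) (hc : 0 ≤ c)
    (hinc : ∀ᵐ ω ∂μ, ∀ n, |Y (n + 1) ω - Y n ω| ≤ c)
    {τ : Ω → ℕ∞} (hτ : IsStoppingTime ℱ τ) (hτint : ∫⁻ ω, (τ ω : ℝ≥0∞) ∂μ ≠ ∞) :
    ∫ ω, stoppedValue Y τ ω ∂μ = ∫ ω, Y 0 ω ∂μ := by
  have hτfin := hτ.ae_ne_top hτint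
  have hbound_int : Integrable (fun ω => |Y 0 ω| + c * ((τ ω).toNat : ℝ)) μ := by
    have htoReal (t : ℕ∞) : (t : ℝ≥0∞).toReal = t.toNat := by
      induction t using ENat.recTopCoe <;> simp
    refine (hY.integrable 0).abs.add (Integrable.const_mul ?_ c)
    simpa only [htoReal] using integrable_toReal_of_lintegral_ne_top
      (f := fun ω => (τ ω : ℝ≥0∞)) ((measurable_of_countable _).comp hτ.measurable').aemeasurable
      hτint
  have hstopped := hY.stoppedProcess hτ
  have hconst (n : ℕ) : ∫ ω, MeasureTheory.stoppedProcess Y τ n ω ∂μ = ∫ ω, Y 0 ω ∂μ := by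
    rw [← setIntegral_univ, ← hstopped.setIntegral_eq (Nat.zero_le n) MeasurableSet.univ,
      setIntegral_univ]
    exact integral_congr_ae (ae_of_all _ fun ω => stoppedProcess_eq_of_le bot_le)
  have hlim := tendsto_integral_of_dominated_convergence _
    (fun n => (hstopped.integrable n).aestronglyMeasurable) hbound_int
    (fun n => by
      filter_upwards [hinc, hτfin] with ω hω hωτ
      exact abs_stoppedProcess_le hc hω hωτ n)
    (by filter_upwards [hτfin] with ω hωτ using tendsto_stoppedProcess_stoppedValue hωτ)
  simp only [hconst] at hlim
  exact tendsto_nhds_unique hlim tendsto_const_nhds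

end OptionalStopping

lemma hitTime_eq_hittingAfter {Ω S : Type*} (X : ℕ → Ω → S) (y : S) (ω : Ω) :
    hitTime X y ω = ENat.toENNReal (hittingAfter X {y} 0 ω) := by
  apply le_antisymm
  · by_cases h : hittingAfter X {y} 0 ω = ⊤
    · rw [h]
      exact le_top.trans_eq ENat.toENNReal_top.symm
    · obtain ⟨T, hT⟩ := ENat.ne_top_iff_exists.1 h
      have hmem : X T ω = y := by
        have := hittingAfter_mem_set_of_ne_top h
        rwa [← hT] at this
      rw [← hT]
      exact sInf_le ⟨T, hmem, by simp⟩
  · refine le_sInf ?_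
    rintro t ⟨n, hn, rfl⟩
    have : hittingAfter X {y} 0 ω ≤ (n : ℕ∞) := hittingAfter_le_of_mem (Nat.zero_le n) hn
    simpa using ENat.toENNReal_le.2 this

namespace IsRealization

variable {Ω S : Type} [MeasurableSpace S] [MeasurableSingletonClass S] {mΩ : MeasurableSpace Ω}
  {μ : Measure Ω} {ℱ : Filtration ℕ mΩ} {X : ℕ → Ω → S} {p : S → S → ℝ}

lemma measurableSet_eq (hX : IsRealization μ ℱ X p) (n : ℕ) (z : S) :
    MeasurableSet[ℱ n] {ω | X n ω = z} :=
  hX.1 n (measurableSet_singleton z)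

lemma measureReal_inter_eq [IsFiniteMeasure μ] (hX : IsRealization μ ℱ X p) {n : ℕ} {z : S}
    {A : Set Ω} (hA : MeasurableSet[ℱ n] A) (hAz : A ⊆ {ω | X n ω = z}) (z' : S) :
    μ.real (A ∩ {ω | X (n + 1) ω = z'}) = p z z' * μ.real A := by
  have hmeas : MeasurableSet {ω | X (n + 1) ω = z'} := ℱ.le _ _ (hX.measurableSet_eq _ _)
  have hint : Integrable ({ω | X (n + 1) ω = z'}.indicator fun _ => (1 : ℝ)) μ :=
    (integrable_const 1).indicator hmeas
  calc μ.real (A ∩ {ω | X (n + 1) ω = z'})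
      = ∫ ω in A, {ω | X (n + 1) ω = z'}.indicator (fun _ => (1 : ℝ)) ω ∂μ := by
        rw [setIntegral_indicator hmeas, setIntegral_const, smul_eq_mul, mul_one]
    _ = ∫ ω in A, (μ[{ω | X (n + 1) ω = z'}.indicator fun _ => (1 : ℝ) | ℱ n]) ω ∂μ :=
        (setIntegral_condExp (ℱ.le n) hint hA).symm
    _ = ∫ _ in A, p z z' ∂μ := setIntegral_congr_ae (ℱ.le n A hA) <| by
        filter_upwards [hX.2 n z z'] with ω hω hωA using hω (hAz hωA)
    _ = p z z' * μ.real A := by rw [setIntegral_const, smul_eq_mul, mul_comm]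

variable [IsFiniteMeasure μ] [Countable S] {N : S → Finset S}

lemma ae_mem_succ (hX : IsRealization μ ℱ X p) (hN : ∀ z, ∑ z' ∈ N z, p z z' = 1) (n : ℕ) :
    ∀ᵐ ω ∂μ, X (n + 1) ω ∈ N (X n ω) := by
  have hz (z : S) : ∀ᵐ ω ∂μ, X n ω = z → X (n + 1) ω ∈ N z := by
    set B := {ω | X n ω = z}
    set C := {ω | X (n + 1) ω ∈ N z}
    have hB : MeasurableSet B := ℱ.le _ _ (hX.measurableSet_eq n z)
    have hC : MeasurableSet C := ℱ.le _ _ (hX.1 (n + 1) (N z).measurableSet)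
    have hBC : B ∩ C = ⋃ z' ∈ N z, B ∩ {ω | X (n + 1) ω = z'} := by ext; simp [B, C]
    have hfull : μ.real (B ∩ C) = μ.real B := by
      rw [hBC, measureReal_biUnion_finset (μ := μ)
        (f := fun z' => B ∩ {ω | X (n + 1) ω = z'})
        ((Set.pairwiseDisjoint_fiber (X (n + 1)) _).mono fun _ => Set.inter_subset_right)
        (fun z' _ => hB.inter (ℱ.le _ _ (hX.measurableSet_eq _ z')))]
      simp_rw [hX.measureReal_inter_eq (A := B) (hX.measurableSet_eq n z) subset_rfl]
      rw [← Finset.sum_mul, hN, one_mul]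
    rw [ae_iff, ← measureReal_eq_zero_iff]
    have hset : {ω | ¬(X n ω = z → X (n + 1) ω ∈ N z)} = B \ (B ∩ C) := by
      ext; simp [B, C]
    rw [hset, measureReal_sdiff Set.inter_subset_left (hB.inter hC), hfull, sub_self]
  filter_upwards [ae_all_iff.2 hz] with ω hω using hω _ rfl

lemma setIntegral_comp_succ_of_subset (hX : IsRealization μ ℱ X p)
    (hN : ∀ z, ∑ z' ∈ N z, p z z' = 1) {f : S → ℝ} {n : ℕ}
    (hint : Integrable (fun ω => f (X (n + 1) ω)) μ) {z : S} {A : Set Ω}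
    (hA : MeasurableSet[ℱ n] A) (hAz : A ⊆ {ω | X n ω = z}) :
    ∫ ω in A, f (X (n + 1) ω) ∂μ = (∑ z' ∈ N z, p z z' * f z') * μ.real A := by
  have hpiece (z' : S) : MeasurableSet (A ∩ {ω | X (n + 1) ω = z'}) :=
    (ℱ.le n A hA).inter (ℱ.le _ _ (hX.measurableSet_eq _ _))
  have hAe : A =ᵐ[μ] ⋃ z' ∈ N z, A ∩ {ω | X (n + 1) ω = z'} := by
    filter_upwards [hX.ae_mem_succ hN n] with ω hω
    change (ω ∈ A) = (ω ∈ ⋃ z' ∈ N z, A ∩ {ω | X (n + 1) ω = z'})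
    simp only [eq_iff_iff, Set.mem_iUnion, Set.mem_inter_iff, Set.mem_ofPred_eq, exists_prop]
    exact ⟨fun h => ⟨_, hAz h ▸ hω, h, rfl⟩, fun ⟨_, _, h, _⟩ => h⟩
  calc ∫ ω in A, f (X (n + 1) ω) ∂μ
      = ∑ z' ∈ N z, ∫ ω in A ∩ {ω | X (n + 1) ω = z'}, f (X (n + 1) ω) ∂μ := by
        rw [setIntegral_congr_set hAe]
        exact integral_biUnion_finset _ (fun z' _ => hpiece z')
          ((Set.pairwiseDisjoint_fiber (X (n + 1)) _).mono fun _ => Set.inter_subset_right)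
          fun z' _ => hint.integrableOn
    _ = ∑ z' ∈ N z, p z z' * f z' * μ.real A := Finset.sum_congr rfl fun z' _ => by
        rw [setIntegral_congr_fun (hpiece z') fun ω hω => congrArg f hω.2, setIntegral_const,
          smul_eq_mul, hX.measureReal_inter_eq hA hAz]
        ring
    _ = (∑ z' ∈ N z, p z z' * f z') * μ.real A := (Finset.sum_mul ..).symm

lemma setIntegral_comp_eq_succ (hX : IsRealization μ ℱ X p) (hN : ∀ z, ∑ z' ∈ N z, p z z' = 1)
    {f : S → ℝ} (hf : ∀ z, ∑ z' ∈ N z, p z z' * f z' = f z)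
    (hint : ∀ n, Integrable (fun ω => f (X n ω)) μ) (n : ℕ) {A : Set Ω}
    (hA : MeasurableSet[ℱ n] A) :
    ∫ ω in A, f (X n ω) ∂μ = ∫ ω in A, f (X (n + 1) ω) ∂μ := by
  have hpiece (z : S) : MeasurableSet[ℱ n] (A ∩ {ω | X n ω = z}) :=
    hA.inter (hX.measurableSet_eq n z)
  have hdisj : Pairwise (Function.onFun Disjoint fun z => A ∩ {ω | X n ω = z}) :=
    (pairwise_disjoint_fiber (X n)).mono fun _ _ h => h.mono Set.inter_subset_right
      Set.inter_subset_right
  have hpart : A = ⋃ z, A ∩ {ω | X n ω = z} := by ext; simp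
  rw [hpart, integral_iUnion (fun z => ℱ.le n _ (hpiece z)) hdisj (hint n).integrableOn,
    integral_iUnion (fun z => ℱ.le n _ (hpiece z)) hdisj (hint (n + 1)).integrableOn]
  refine tsum_congr fun z => ?_
  rw [hX.setIntegral_comp_succ_of_subset hN (hint _) (hpiece z) Set.inter_subset_right, hf z,
    setIntegral_congr_fun (ℱ.le n _ (hpiece z)) fun ω hω => congrArg f hω.2, setIntegral_const,
    smul_eq_mul, mul_comm]

lemma martingale_comp (hX : IsRealization μ ℱ X p) (hN : ∀ z, ∑ z' ∈ N z, p z z' = 1)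
    {f : S → ℝ} (hf : ∀ z, ∑ z' ∈ N z, p z z' * f z' = f z)
    (hint : ∀ n, Integrable (fun ω => f (X n ω)) μ) :
    Martingale (fun n ω => f (X n ω)) ℱ μ :=
  martingale_of_setIntegral_eq_succ
    (fun n => ((measurable_of_countable f).comp (hX.1 n)).stronglyMeasurable) hint
    fun n _ hA => hX.setIntegral_comp_eq_succ hN hf hint n hA

lemma ae_abs_comp_succ_sub_le (hX : IsRealization μ ℱ X p) (hN : ∀ z, ∑ z' ∈ N z, p z z' = 1)
    {f : S → ℝ} {c : ℝ} (hfc : ∀ z, ∀ z' ∈ N z, |f z' - f z| ≤ c) :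
    ∀ᵐ ω ∂μ, ∀ n, |f (X (n + 1) ω) - f (X n ω)| ≤ c :=
  ae_all_iff.2 fun n => by
    filter_upwards [hX.ae_mem_succ hN n] with ω hω using hfc _ _ hω

theorem eq_of_lintegral_hitTime_ne_top [IsProbabilityMeasure μ] (hX : IsRealization μ ℱ X p)
    (hN : ∀ z, ∑ z' ∈ N z, p z z' = 1) {f : S → ℝ} (hf : ∀ z, ∑ z' ∈ N z, p z z' * f z' = f z)
    {c : ℝ} (hc : 0 ≤ c) (hfc : ∀ z, ∀ z' ∈ N z, |f z' - f z| ≤ c) {x y : S}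
    (hX0 : ∀ᵐ ω ∂μ, X 0 ω = x) (hT : ∫⁻ ω, hitTime X y ω ∂μ ≠ ∞) : f x = f y := by
  have hinc := hX.ae_abs_comp_succ_sub_le hN hfc
  have hX0' : ∀ᵐ ω ∂μ, f (X 0 ω) = f x := hX0.mono fun ω h => congrArg f h
  have hmeas (n : ℕ) : Measurable (X n) := (hX.1 n).mono (ℱ.le n) le_rfl
  have hint := integrable_of_abs_sub_succ_le (Y := fun n ω => f (X n ω))
    (fun n => ((measurable_of_countable f).comp (hmeas n)).aestronglyMeasurable)
    ((integrable_const (f x)).congr (hX0'.mono fun _ h => h.symm)) hinc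
  have hτ : IsStoppingTime ℱ (hittingAfter X {y} 0) :=
    Adapted.isStoppingTime_hittingAfter hX.1 (measurableSet_singleton y)
  simp_rw [hitTime_eq_hittingAfter] at hT
  have hOST := (hX.martingale_comp hN hf hint).integral_stoppedValue_eq hc hinc hτ hT
  have hstop : ∀ᵐ ω ∂μ, stoppedValue (fun n ω => f (X n ω)) (hittingAfter X {y} 0) ω = f y := by
    filter_upwards [hτ.ae_ne_top hT] with ω hω
    exact congrArg f (hittingAfter_mem_set_of_ne_top hω)
  rw [integral_congr_ae hstop, integral_congr_ae hX0'] at hOST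
  simpa using hOST.symm

end IsRealization

lemma neg_one_pow_mod_of_even {R : Type*} [Monoid R] [HasDistribNeg R] {M : ℕ} (hM : Even M)
    (n : ℕ) : (-1 : R) ^ (n % M) = (-1) ^ n := by
  conv_rhs => rw [← Nat.mod_add_div n M]
  rw [pow_add, pow_mul, hM.neg_one_pow, one_pow, mul_one]

section PushPullRing

variable {M : ℕ} {lam : Fin M → ℝ}

lemma sum_neg_one_pow_val (hM : Even M) : ∑ j : Fin M, (-1 : ℝ) ^ (j : ℕ) = 0 := by
  rw [Fin.sum_univ_eq_sum_range (fun k => (-1 : ℝ) ^ k), neg_one_geom_sum, if_pos hM]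

noncomputable def ringPotential (lam : Fin M → ℝ) (z : Fin M → ℕ) : ℝ :=
  ∑ j : Fin M, (-1 : ℝ) ^ (j : ℕ) * (lam j)⁻¹ * (z j : ℝ)

lemma ringPotential_update (z : Fin M → ℕ) (j : Fin M) (v : ℕ) :
    ringPotential lam (Function.update z j v)
      = ringPotential lam z + (-1) ^ (j : ℕ) * (lam j)⁻¹ * ((v : ℝ) - z j) := by
  simp only [ringPotential]
  rw [← Finset.add_sum_erase _ _ (Finset.mem_univ j),
    ← Finset.add_sum_erase _ _ (Finset.mem_univ j), Function.update_self,
    Finset.sum_congr rfl fun i hi => by rw [Function.update_of_ne (Finset.ne_of_mem_erase hi)]]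
  ring

variable [NeZero M]

lemma neg_one_pow_val_sub_one (hM : Even M) (j : Fin M) :
    (-1 : ℝ) ^ ((j - 1 : Fin M) : ℕ) = -(-1) ^ (j : ℕ) := by
  have h := congrArg (fun i : Fin M => (-1 : ℝ) ^ (i : ℕ)) (sub_add_cancel j 1)
  simp only [Fin.val_add, Fin.val_one', neg_one_pow_mod_of_even hM, pow_add, pow_one] at h
  rw [← h]
  ring

def ringStep (P : (Fin M → ℕ) → Fin M → Bool) (z : Fin M → ℕ) (j : Fin M) : Fin M → ℕ :=
  if P z j then Function.update z j (z j + 1) else Function.update z (j - 1) (z (j - 1) - 1)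

def ringRate (lam : Fin M → ℝ) (u : Fin M → Bool) (j : Fin M) : ℝ :=
  if u j then lam j else lam (j - 1)

variable {P : (Fin M → ℕ) → Fin M → Bool}

lemma ringStep_injective (hP : RingNonIdling M P) (z : Fin M → ℕ) :
    Function.Injective (ringStep P z) := by
  intro j j' h
  by_contra hne
  unfold ringStep at h
  rcases hj : P z j <;> rcases hj' : P z j' <;> simp only [hj, hj', if_true, if_false,
    Bool.false_eq_true] at h
  · have hsub : j - 1 ≠ j' - 1 := fun h' => hne (sub_left_injective h')
    have hval := congrFun h (j - 1)
    rw [Function.update_self, Function.update_of_ne hsub] at hval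
    have hpos := hP z j hj
    omega
  · have hval := congrFun h j'
    rw [Function.update_self, Function.update_apply] at hval
    have hpos := hP z j hj
    split_ifs at hval with hc
    · subst hc; omega
    · omega
  · have hval := congrFun h j
    rw [Function.update_self, Function.update_apply] at hval
    have hpos := hP z j' hj'
    split_ifs at hval with hc
    · subst hc; omega
    · omega
  · have hval := congrFun h j
    rw [Function.update_self, Function.update_of_ne hne] at hval
    omega

lemma ringTrans_ringStep (hP : RingNonIdling M P) (z : Fin M → ℕ) (j : Fin M) :
    ringTrans M lam P z (ringStep P z j) = ringRate lam (P z) j / ringr M lam lam (P z) := by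
  unfold ringTrans
  rw [Finset.sum_eq_single j]
  · rcases hj : P z j <;> simp [ringStep, ringRate, hj]
  · intro i _ hij
    have hne : ringStep P z j ≠ ringStep P z i := fun h => hij (ringStep_injective hP z h).symm
    rcases hi : P z i <;> simp [ringStep, hi] at hne ⊢ <;> simp [hne]
  · simp

lemma ringr_pos (hlam : ∀ j, 0 < lam j) (u : Fin M → Bool) : 0 < ringr M lam lam u :=
  Finset.sum_pos (fun j _ => by split <;> exact hlam _) Finset.univ_nonempty

lemma sum_ringTrans_ringStep (hP : RingNonIdling M P) (hlam : ∀ j, 0 < lam j)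
    (z : Fin M → ℕ) : ∑ j, ringTrans M lam P z (ringStep P z j) = 1 := by
  simp_rw [ringTrans_ringStep hP, ← Finset.sum_div]
  exact div_self (ringr_pos hlam (P z)).ne'

/-- A pull by server `j` decreases queue `j - 1`, whose sign in the potential is `-(-1)^j`
because `M` is even. -/
lemma ringPotential_ringStep (hP : RingNonIdling M P) (hM : Even M) (z : Fin M → ℕ)
    (j : Fin M) :
    ringPotential lam (ringStep P z j)
      = ringPotential lam z + (-1) ^ (j : ℕ) / ringRate lam (P z) j := by
  unfold ringStep ringRate
  rcases hj : P z j
  · simp only [Bool.false_eq_true, if_false, ringPotential_update,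
      Nat.cast_sub (hP z j hj), neg_one_pow_val_sub_one hM]
    ring
  · simp only [if_true, ringPotential_update]
    push_cast
    ring

lemma sum_ringTrans_mul_ringPotential (hP : RingNonIdling M P) (hlam : ∀ j, 0 < lam j)
    (hM : Even M) (z : Fin M → ℕ) :
    ∑ j, ringTrans M lam P z (ringStep P z j) * ringPotential lam (ringStep P z j)
      = ringPotential lam z := by
  have hrate (j : Fin M) : ringRate lam (P z) j ≠ 0 := by
    unfold ringRate; split <;> exact (hlam _).ne'
  calc ∑ j, ringTrans M lam P z (ringStep P z j) * ringPotential lam (ringStep P z j)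
      = ∑ j, (ringTrans M lam P z (ringStep P z j) * ringPotential lam z
          + (-1) ^ (j : ℕ) / ringr M lam lam (P z)) := Finset.sum_congr rfl fun j _ => by
        rw [ringPotential_ringStep hP hM, ringTrans_ringStep hP]
        field_simp [hrate j]
    _ = ringPotential lam z := by
        rw [Finset.sum_add_distrib, ← Finset.sum_mul, sum_ringTrans_ringStep hP hlam,
          ← Finset.sum_div, sum_neg_one_pow_val hM, zero_div, one_mul, add_zero]

lemma abs_ringPotential_ringStep_sub_le (hP : RingNonIdling M P) (hlam : ∀ j, 0 < lam j)
    (hM : Even M) (z : Fin M → ℕ) (j : Fin M) :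
    |ringPotential lam (ringStep P z j) - ringPotential lam z| ≤ ∑ i, (lam i)⁻¹ := by
  rw [ringPotential_ringStep hP hM, add_sub_cancel_left, abs_div, abs_pow, abs_neg, abs_one,
    one_pow, one_div]
  unfold ringRate
  split <;> rw [abs_of_pos (hlam _)] <;>
    exact Finset.single_le_sum (fun i _ => (inv_pos.2 (hlam i)).le) (Finset.mem_univ _)

end PushPullRing

theorem ring_hitting_time_infinite_general (M : ℕ) [NeZero M] (hMeven : Even M)
    (lam : Fin M → ℝ) (hlam : ∀ j, 0 < lam j)
    (P : (Fin M → ℕ) → (Fin M → Bool)) (hP : RingNonIdling M P)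
    {Ω : Type} {mΩ : MeasurableSpace Ω} (μ : Measure Ω) [IsProbabilityMeasure μ]
    (ℱ : Filtration ℕ mΩ) (X : ℕ → Ω → (Fin M → ℕ))
    (x : Fin M → ℕ) (hX0 : ∀ᵐ ω ∂μ, X 0 ω = x)
    (hX : IsRealization μ ℱ X (ringTrans M lam P))
    (y : Fin M → ℕ)
    (hxy : ∑ j : Fin M, (-1 : ℝ) ^ (j : ℕ) * (lam j)⁻¹ * (x j : ℝ)
         ≠ ∑ j : Fin M, (-1 : ℝ) ^ (j : ℕ) * (lam j)⁻¹ * (y j : ℝ)) :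
    ∫⁻ ω, hitTime X y ω ∂μ = ⊤ := by
  have hsum (z : Fin M → ℕ) (g : (Fin M → ℕ) → ℝ) :
      ∑ z' ∈ Finset.univ.image (ringStep P z), g z' = ∑ j, g (ringStep P z j) :=
    Finset.sum_image fun j _ j' _ h => ringStep_injective hP z h
  by_contra hfin
  refine hxy (hX.eq_of_lintegral_hitTime_ne_top (N := fun z => Finset.univ.image (ringStep P z))
    (f := ringPotential lam) (c := ∑ i, (lam i)⁻¹) (fun z => ?_) (fun z => ?_)
    (Finset.sum_nonneg fun i _ => (inv_pos.2 (hlam i)).le) (fun z z' hz' => ?_) hX0 hfin)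
  · rw [hsum]
    exact sum_ringTrans_ringStep hP hlam z
  · rw [hsum]
    exact sum_ringTrans_mul_ringPotential hP hlam hMeven z
  · obtain ⟨j, -, rfl⟩ := Finset.mem_image.1 hz'
    exact abs_ringPotential_ringStep_sub_le hP hlam hMeven z j

/-- Non-stabilizability of the critical push-pull ring with an even number of servers,
hitting-time form: with `αⱼ = (-1)^(j+1) λⱼ⁻¹`, for every non-idling policy, every
realization of the induced chain started at `x`, and every state `y` with
`α ⬝ x ≠ α ⬝ y`, the hitting time of `y` has infinite expectation. -/
theorem ring_hitting_time_infinite (M : ℕ) [NeZero M] (hM : 2 ≤ M) (hMeven : Even M)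
    (lam : Fin M → ℝ) (hlam : ∀ j, 0 < lam j)
    (P : (Fin M → ℕ) → (Fin M → Bool)) (hP : RingNonIdling M P)
    {Ω : Type} {mΩ : MeasurableSpace Ω} (μ : Measure Ω) [IsProbabilityMeasure μ]
    (ℱ : Filtration ℕ mΩ) (X : ℕ → Ω → (Fin M → ℕ))
    (x : Fin M → ℕ) (hX0 : ∀ᵐ ω ∂μ, X 0 ω = x)
    (hX : IsRealization μ ℱ X (ringTrans M lam P))
    (y : Fin M → ℕ)
    (hxy : ∑ j : Fin M, (-1 : ℝ) ^ (j : ℕ) * (lam j)⁻¹ * (x j : ℝ)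
         ≠ ∑ j : Fin M, (-1 : ℝ) ^ (j : ℕ) * (lam j)⁻¹ * (y j : ℝ)) :
    ∫⁻ ω, hitTime X y ω ∂μ = ⊤ :=
  ring_hitting_time_infinite_general M hMeven lam hlam P hP μ ℱ X x hX0 hX y hxy
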